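/- arXiv:math/0406445 — 6 statements merged into one kernel-verified Lean document; each statement's English description precedes it below -/
import Mathlib

section
/- Let R be a commutative ring, A a commutative R-algebra, L an A-module with an R-bilinear antisymmetric bracket [·,·] satisfying the Jacobi identity, and ρ : L → Der_R(A) an A-linear map satisfying the Leibniz rule [s, f·t] = f·[s,t] + ρ(s)(f)·t and the homomorphism property ρ([s,t]) = ρ(s)∘ρ(t) − ρ(t)∘ρ(s). Define ᴱL_s := ι_s ∘ d + d ∘ ι_s on alternating forms, with d the Cartan-formula differential. Then the E-Lie derivative is a representation of the Lie algebra L on forms: for all s, t ∈ L, every p ≥ 0 and every alternating A-multilinear ω : L^p → A, (ᴱL_s(ᴱL_t ω) − ᴱL_t(ᴱL_s ω)) = ᴱL_{[s,t]} ω. -/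
/-!
On forms, Cartan's formula `ι_s ∘ d + d ∘ ι_s` collapses to the classical expression
`(ᴱL_s ω)(u₁, …, u_p) = ρ(s)(ω(u)) − Σᵢ ω(u₁, …, [s, uᵢ], …, u_p)`: the `ρ(uᵢ)`-terms and the
`[uᵢ, uⱼ]`-terms of `ι_s dω` and of `d ι_s ω` cancel pairwise, after moving the inserted entry
to its slot by a cyclic permutation. By the Leibniz rule this expression is again an alternating
form, so it can be iterated. In the commutator `ᴱL_s ᴱL_t − ᴱL_t ᴱL_s` the anchor terms give
`ρ([s,t])` because `ρ` is a homomorphism, the terms bracketing two different slots are symmetric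
in `s` and `t` and cancel, and the terms bracketing the same slot twice combine to
`−[[s,t], uᵢ]` by the Jacobi identity.
-/

/-- A `p`-form: an alternating `A`-multilinear map `L^p → A`. -/
def IsAltForm {A L : Type*} [CommRing A] [AddCommGroup L] [Module A L]
    (p : ℕ) (ω : (Fin p → L) → A) : Prop :=
  (∀ (s : Fin p → L) (i : Fin p) (x y : L),
      ω (Function.update s i (x + y)) =
        ω (Function.update s i x) + ω (Function.update s i y)) ∧
  (∀ (s : Fin p → L) (i : Fin p) (f : A) (x : L),
      ω (Function.update s i (f • x)) = f * ω (Function.update s i x)) ∧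
  (∀ (s : Fin p → L) (i j : Fin p), i ≠ j → s i = s j → ω s = 0)

/-- The `p`-tuple `([sᵢ,sⱼ], …, ŝᵢ, …, ŝⱼ, …)` obtained from a `(p+1)`-tuple `s`
by removing the entries at positions `i < j` and prepending the bracket `[sᵢ, sⱼ]`. -/
def bracketTuple {L : Type*} (br : L → L → L) {p : ℕ} (i j : Fin (p + 1))
    (s : Fin (p + 1) → L) : Fin p → L :=
  fun k =>
    if (k : ℕ) = 0 then br (s i) (s j)
    else s ⟨if (k : ℕ) - 1 < (i : ℕ) then (k : ℕ) - 1
            else if (k : ℕ) < (j : ℕ) then (k : ℕ) else (k : ℕ) + 1, by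
      have hk := k.isLt
      split_ifs <;> omega⟩

/-- The Cartan-formula differential of a `p`-form:
`(dω)(s₁,…,s_{p+1}) = Σᵢ (−1)^{i+1} ρ(sᵢ)(ω(…,ŝᵢ,…))
  + Σ_{i<j} (−1)^{i+j} ω([sᵢ,sⱼ],…,ŝᵢ,…,ŝⱼ,…)` (written with 0-based indices,
so the signs read `(−1)^i` and `(−1)^{i+j}`). -/
def cartanD {R A L : Type*} [CommRing R] [CommRing A] [Algebra R A]
    [AddCommGroup L] [Module A L]
    (ρ : L → Derivation R A A) (br : L → L → L) (p : ℕ)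
    (ω : (Fin p → L) → A) : (Fin (p + 1) → L) → A :=
  fun s =>
    (∑ i : Fin (p + 1),
        (-1 : A) ^ (i : ℕ) * ρ (s i) (ω fun k => s (i.succAbove k)))
      + ∑ i : Fin (p + 1), ∑ j : Fin (p + 1),
          if (i : ℕ) < (j : ℕ) then
            (-1 : A) ^ ((i : ℕ) + (j : ℕ)) * ω (bracketTuple br i j s)
          else 0

/-- Contraction of a `(p+1)`-form in its first slot. -/
def contr {A L : Type*} {p : ℕ} (x : L)
    (ω : (Fin (p + 1) → L) → A) : (Fin p → L) → A :=
  fun t => ω (Fin.cons x t)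

/-- The `E`-Lie derivative on `p`-forms, given by Cartan's magic formula
`ᴱL_x = ι_x ∘ d + d ∘ ι_x` (for `p = 0` the contraction of a `0`-form is zero,
so only the first term remains). -/
def lieDer {R A L : Type*} [CommRing R] [CommRing A] [Algebra R A]
    [AddCommGroup L] [Module A L]
    (ρ : L → Derivation R A A) (br : L → L → L) (x : L) :
    (p : ℕ) → ((Fin p → L) → A) → (Fin p → L) → A
  | 0, ω => contr x (cartanD ρ br 0 ω)
  | (q + 1), ω => fun t =>
      contr x (cartanD ρ br (q + 1) ω) t + cartanD ρ br q (contr x ω) t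

open Finset Function

section Tuple

variable {α : Type*}

lemma Fin.cons_succAbove_succ {q : ℕ} (x : α) (u : Fin (q + 1) → α) (k : Fin (q + 1)) :
    (fun m => (Fin.cons x u : Fin (q + 2) → α) (k.succ.succAbove m)) =
      Fin.cons x (fun m => u (k.succAbove m)) := by
  ext m
  cases m using Fin.cases <;> simp

lemma Fin.cons_mk {n : ℕ} (x : α) (u : Fin n → α) (k : ℕ) (hk : k < n + 1) :
    (Fin.cons x u : Fin (n + 1) → α) ⟨k, hk⟩ = if h : k = 0 then x else u ⟨k - 1, by omega⟩ := by
  cases k <;> rfl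

lemma Fin.val_succAbove {n : ℕ} (l : Fin (n + 1)) (k : Fin n) :
    (l.succAbove k : ℕ) = if (k : ℕ) < l then (k : ℕ) else (k : ℕ) + 1 := by
  rw [Fin.succAbove]
  split_ifs <;> simp_all [Fin.lt_def]

lemma bracketTuple_zero_succ_cons (br : α → α → α) {q : ℕ} (x : α) (u : Fin (q + 1) → α)
    (l : Fin (q + 1)) :
    bracketTuple br 0 l.succ (Fin.cons x u) = Fin.cons (br x (u l)) (l.removeNth u) := by
  ext ⟨r, hr⟩
  simp only [bracketTuple, Fin.cons_mk, Fin.removeNth, Fin.val_succ, Fin.val_zero, Fin.cons_zero,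
    Fin.cons_succ]
  split_ifs <;> first | omega | rfl | contradiction |
    (congr 1; ext; simp only [Fin.val_succAbove]; split_ifs <;> omega)

lemma bracketTuple_succ_succ_cons (br : α → α → α) {q : ℕ} (x : α) (u : Fin (q + 2) → α)
    {k m : Fin (q + 2)} (hkm : k < m) :
    bracketTuple br k.succ m.succ (Fin.cons x u) =
      Fin.cons x (bracketTuple br k m u) ∘ Equiv.swap 0 1 := by
  rw [Fin.lt_def] at hkm
  ext r
  cases r using Fin.cases with
  | zero => simp [bracketTuple]
  | succ r =>
  cases r using Fin.cases with
  | zero => simp [bracketTuple]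
  | succ r =>
    rw [comp_apply, Equiv.swap_apply_of_ne_of_ne (Fin.succ_ne_zero _) (Fin.succ_succ_ne_one _)]
    simp only [bracketTuple, Fin.cons_succ, Fin.val_succ, Fin.cons_mk]
    split_ifs <;> first | rfl | omega |
      (congr 1; ext; (try simp only); split_ifs <;> omega)

end Tuple

section SumUpdate

variable {α A : Type*} {p : ℕ}

def sumUpdate [AddCommMonoid A] (g : α → α) (ω : (Fin p → α) → A) (u : Fin p → α) : A :=
  ∑ i, ω (update u i (g (u i)))

lemma sumUpdate_sub [AddCommGroup A] (g : α → α) (φ ψ : (Fin p → α) → A) (u : Fin p → α) :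
    sumUpdate g (fun v => φ v - ψ v) u = sumUpdate g φ u - sumUpdate g ψ u :=
  sum_sub_distrib _ _

lemma sumUpdate_map [AddCommMonoid A] {B : Type*} [AddCommMonoid B] {F : Type*} [FunLike F A B]
    [AddMonoidHomClass F A B] (φ : F) (g : α → α) (ω : (Fin p → α) → A) (u : Fin p → α) :
    sumUpdate g (fun v => φ (ω v)) u = φ (sumUpdate g ω u) :=
  (map_sum φ _ _).symm

lemma sumUpdate_sumUpdate [AddCommMonoid A] (f g : α → α) (ω : (Fin p → α) → A)
    (u : Fin p → α) :
    sumUpdate f (sumUpdate g ω) u = sumUpdate (g ∘ f) ω u +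
      ∑ i, ∑ j ∈ univ.erase i, ω (update (update u i (f (u i))) j (g (u j))) := by
  rw [sumUpdate, sumUpdate, ← sum_add_distrib]
  refine sum_congr rfl fun i _ => ?_
  rw [sumUpdate, ← add_sum_erase _ _ (mem_univ i), update_self, update_idem]
  congr 1
  refine sum_congr rfl fun j hj => ?_
  rw [update_of_ne (ne_of_mem_erase hj)]

/-- Only the terms in which both maps act on the same slot survive in the commutator. -/
lemma sumUpdate_commutator [AddCommGroup A] (f g : α → α) (ω : (Fin p → α) → A)
    (u : Fin p → α) :
    sumUpdate f (sumUpdate g ω) u - sumUpdate g (sumUpdate f ω) u =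
      sumUpdate (g ∘ f) ω u - sumUpdate (f ∘ g) ω u := by
  have hsymm : ∑ i, ∑ j ∈ univ.erase i, ω (update (update u i (f (u i))) j (g (u j))) =
      ∑ i, ∑ j ∈ univ.erase i, ω (update (update u i (g (u i))) j (f (u j))) := by
    rw [sum_comm' (t' := univ) (s' := fun j => univ.erase j) (by simp [ne_comm])]
    refine sum_congr rfl fun i _ => sum_congr rfl fun j hj => ?_
    rw [update_comm (ne_of_mem_erase hj).symm]
  rw [sumUpdate_sumUpdate, sumUpdate_sumUpdate, hsymm]
  abel

lemma sumUpdate_update_add [Add α] [AddCommMonoid A] {g : α → α}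
    (hg : ∀ x y, g (x + y) = g x + g y) {ω : (Fin p → α) → A}
    (hω : ∀ u i x y, ω (update u i (x + y)) = ω (update u i x) + ω (update u i y))
    (u : Fin p → α) (j : Fin p) (x y : α) :
    sumUpdate g ω (update u j (x + y)) =
      sumUpdate g ω (update u j x) + sumUpdate g ω (update u j y) := by
  rw [sumUpdate, sumUpdate, sumUpdate, ← sum_add_distrib]
  refine sum_congr rfl fun i _ => ?_
  obtain rfl | hij := eq_or_ne i j
  · simp only [update_self, update_idem, hg, hω]
  · simp only [update_of_ne hij]
    rw [update_comm hij.symm, update_comm hij.symm, update_comm hij.symm, hω]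

end SumUpdate

namespace IsAltForm

variable {A L : Type*} [CommRing A] [AddCommGroup L] [Module A L] {p : ℕ}
  {ω : (Fin p → L) → A}

def toAlternatingMap (hω : IsAltForm p ω) : L [⋀^Fin p]→ₗ[A] A where
  toFun := ω
  -- `convert` reconciles the `DecidableEq (Fin p)` instance used by `update`
  map_update_add' v i x y := by convert hω.1 v i x y
  map_update_smul' v i f x := by rw [smul_eq_mul]; convert hω.2.1 v i f x
  map_eq_zero_of_eq' v i j h hij := hω.2.2 v i j hij h

@[simp]
lemma coe_toAlternatingMap (hω : IsAltForm p ω) : ⇑hω.toAlternatingMap = ω := rfl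

lemma map_update_sub (hω : IsAltForm p ω) (u : Fin p → L) (i : Fin p) (x y : L) :
    ω (update u i (x - y)) = ω (update u i x) - ω (update u i y) :=
  hω.toAlternatingMap.map_update_sub u i x y

lemma map_update_neg (hω : IsAltForm p ω) (u : Fin p → L) (i : Fin p) (x : L) :
    ω (update u i (-x)) = -ω (update u i x) :=
  hω.toAlternatingMap.map_update_neg u i x

lemma map_swap (hω : IsAltForm p ω) (u : Fin p → L) {i j : Fin p} (hij : i ≠ j) :
    ω (u ∘ Equiv.swap i j) = -ω u :=
  hω.toAlternatingMap.map_swap u hij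

lemma map_cons_removeNth {q : ℕ} {ω : (Fin (q + 1) → L) → A} (hω : IsAltForm (q + 1) ω)
    (u : Fin (q + 1) → L) (l : Fin (q + 1)) (x : L) :
    ω (Fin.cons x (l.removeNth u)) = (-1) ^ (l : ℕ) * ω (update u l x) := by
  simpa [← Fin.insertNth_removeNth, Matrix.vecCons] using
    (hω.toAlternatingMap.neg_one_pow_smul_map_insertNth l x (l.removeNth u)).symm

lemma map_bracketTuple_zero_succ_cons {q : ℕ} {ω : (Fin (q + 1) → L) → A}
    (hω : IsAltForm (q + 1) ω) (br : L → L → L) (x : L) (u : Fin (q + 1) → L) (l : Fin (q + 1)) :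
    ω (bracketTuple br 0 l.succ (Fin.cons x u)) = (-1) ^ (l : ℕ) * ω (update u l (br x (u l))) := by
  rw [bracketTuple_zero_succ_cons, hω.map_cons_removeNth]

lemma map_bracketTuple_succ_succ_cons {q : ℕ} {ω : (Fin (q + 1) → L) → A}
    (hω : IsAltForm (q + 1) ω) (br : L → L → L) (x : L) (u : Fin (q + 1) → L)
    {k m : Fin (q + 1)} (hkm : k < m) :
    ω (bracketTuple br k.succ m.succ (Fin.cons x u)) = -ω (Fin.cons x (bracketTuple br k m u)) := by
  obtain ⟨n, rfl⟩ : ∃ n, q = n + 1 := ⟨q - 1, by have := m.isLt; rw [Fin.lt_def] at hkm; omega⟩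
  rw [bracketTuple_succ_succ_cons br x u hkm, hω.map_swap _ Fin.zero_ne_one]

lemma sumUpdate_sub (hω : IsAltForm p ω) (f g : L → L) (u : Fin p → L) :
    sumUpdate (fun x => f x - g x) ω u = sumUpdate f ω u - sumUpdate g ω u := by
  simp only [sumUpdate, hω.map_update_sub, sum_sub_distrib]

lemma sumUpdate_neg (hω : IsAltForm p ω) (g : L → L) (u : Fin p → L) :
    sumUpdate (fun x => -g x) ω u = -sumUpdate g ω u := by
  simp only [sumUpdate, hω.map_update_neg, sum_neg_distrib]

/-- The terms updating the two equal slots cancel by antisymmetry; all others vanish. -/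
lemma sumUpdate_eq_zero (hω : IsAltForm p ω) (g : L → L) {u : Fin p → L} {i j : Fin p}
    (hij : i ≠ j) (hu : u i = u j) : sumUpdate g ω u = 0 := by
  have hswap : update u j (g (u j)) = update u i (g (u i)) ∘ Equiv.swap i j := by
    rw [update_comp_equiv, Equiv.symm_swap, Equiv.swap_apply_left, Equiv.comp_swap_eq_update,
      hu, update_eq_self, (update_eq_self_iff (f := u)).mpr hu.symm]
  rw [sumUpdate, Fintype.sum_eq_add i j hij, hswap, hω.map_swap _ hij, add_neg_cancel]
  rintro k ⟨hki, hkj⟩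
  exact hω.2.2 _ i j hij (by rw [update_of_ne hki.symm, update_of_ne hkj.symm, hu])

end IsAltForm

section LieDerivative

variable {R A L : Type*} [CommRing R] [CommRing A] [Algebra R A] [AddCommGroup L] [Module A L]
  (ρ : L → Derivation R A A) (br : L → L → L)

lemma cartanD_cons {q : ℕ} {ω : (Fin (q + 1) → L) → A} (hω : IsAltForm (q + 1) ω)
    (x : L) (u : Fin (q + 1) → L) :
    cartanD ρ br (q + 1) ω (Fin.cons x u) =
      ρ x (ω u) - sumUpdate (br x) ω u - cartanD ρ br q (contr x ω) u := by
  unfold cartanD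
  rw [Fin.sum_univ_succ, Fin.sum_univ_succ (f := fun i : Fin (q + 2) => ∑ j : Fin (q + 2), _)]
  have hx : ρ ((Fin.cons x u : Fin (q + 2) → L) 0)
      (ω fun k => (Fin.cons x u : Fin (q + 2) → L) (Fin.succAbove 0 k)) = ρ x (ω u) := by
    simp
  have hanchor : ∑ i : Fin (q + 1), (-1 : A) ^ (i.succ : ℕ) *
        ρ ((Fin.cons x u : Fin (q + 2) → L) i.succ)
        (ω fun k => (Fin.cons x u : Fin (q + 2) → L) (i.succ.succAbove k)) =
      -∑ i : Fin (q + 1), (-1) ^ (i : ℕ) * ρ (u i) (contr x ω fun k => u (i.succAbove k)) := by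
    rw [← sum_neg_distrib]
    refine sum_congr rfl fun i _ => ?_
    rw [Fin.val_succ, pow_succ, Fin.cons_succ, Fin.cons_succAbove_succ, contr]
    ring
  have hbracket_zero : (∑ j : Fin (q + 2), if 0 < (j : ℕ) then
        (-1 : A) ^ (0 + (j : ℕ)) * ω (bracketTuple br 0 j (Fin.cons x u)) else 0) =
      -sumUpdate (br x) ω u := by
    rw [Fin.sum_univ_succ, if_neg (by simp), zero_add, sumUpdate, ← sum_neg_distrib]
    refine sum_congr rfl fun l _ => ?_
    have hsq : ((-1 : A) ^ (l : ℕ)) ^ 2 = 1 := by rw [← pow_mul, pow_mul', neg_one_sq, one_pow]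
    rw [if_pos (by simp), hω.map_bracketTuple_zero_succ_cons, zero_add, Fin.val_succ]
    linear_combination (-ω (update u l (br x (u l)))) * hsq
  have hbracket_succ : (∑ i : Fin (q + 1), ∑ j : Fin (q + 2), if (i.succ : ℕ) < j then
        (-1 : A) ^ ((i.succ : ℕ) + j) * ω (bracketTuple br i.succ j (Fin.cons x u)) else 0) =
      -∑ i : Fin (q + 1), ∑ j : Fin (q + 1), if (i : ℕ) < j then
        (-1) ^ ((i : ℕ) + j) * contr x ω (bracketTuple br i j u) else 0 := by
    rw [← sum_neg_distrib]
    refine sum_congr rfl fun i _ => ?_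
    rw [Fin.sum_univ_succ, if_neg (by simp), zero_add, ← sum_neg_distrib]
    refine sum_congr rfl fun j _ => ?_
    simp only [Fin.val_succ, add_lt_add_iff_right, Fin.val_fin_lt]
    split_ifs with hij
    · rw [hω.map_bracketTuple_succ_succ_cons br x u hij, contr]
      ring
    · rw [neg_zero]
  rw [Fin.val_zero, pow_zero, one_mul, hx, hanchor, hbracket_zero, hbracket_succ]
  ring

lemma lieDer_eq {p : ℕ} {ω : (Fin p → L) → A} (hω : IsAltForm p ω) (s : L) :
    lieDer ρ br s p ω = fun u => ρ s (ω u) - sumUpdate (br s) ω u := by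
  funext u
  cases p with
  | zero => simp [lieDer, contr, cartanD, sumUpdate]
  | succ q =>
    change cartanD ρ br (q + 1) ω (Fin.cons s u) + cartanD ρ br q (contr s ω) u = _
    rw [cartanD_cons ρ br hω]
    ring

lemma IsAltForm.sumUpdate_update_smul {p : ℕ} {ω : (Fin p → L) → A} (hω : IsAltForm p ω)
    {s : L} (hleibniz : ∀ (y : L) (f : A), br s (f • y) = f • br s y + ρ s f • y)
    (u : Fin p → L) (j : Fin p) (f : A) (x : L) :
    sumUpdate (br s) ω (update u j (f • x)) =
      f * sumUpdate (br s) ω (update u j x) + ρ s f * ω (update u j x) := by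
  have hterm : ∀ i, ω (update (update u j (f • x)) i (br s (update u j (f • x) i))) =
      f * ω (update (update u j x) i (br s (update u j x i))) +
        if i = j then ρ s f * ω (update u j x) else 0 := by
    intro i
    obtain rfl | hij := eq_or_ne i j
    · simp only [update_self, update_idem, if_true, hleibniz, hω.1, hω.2.1]
    · rw [if_neg hij, add_zero, update_of_ne hij, update_of_ne hij, update_comm hij.symm,
        update_comm hij.symm, hω.2.1]
  simp only [sumUpdate, hterm, sum_add_distrib, ← mul_sum, Fintype.sum_ite_eq']

lemma IsAltForm.lieDer {p : ℕ} {ω : (Fin p → L) → A} (hω : IsAltForm p ω) {s : L}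
    (hbr_add : ∀ y z, br s (y + z) = br s y + br s z)
    (hleibniz : ∀ (y : L) (f : A), br s (f • y) = f • br s y + ρ s f • y) :
    IsAltForm p (lieDer ρ br s p ω) := by
  rw [lieDer_eq ρ br hω]
  refine ⟨fun u i x y => ?_, fun u i f x => ?_, fun u i j hij hu => ?_⟩ <;> beta_reduce
  · rw [hω.1, map_add, sumUpdate_update_add hbr_add hω.1]
    ring
  · rw [hω.2.1, Derivation.leibniz, hω.sumUpdate_update_smul ρ br hleibniz, smul_eq_mul,
      smul_eq_mul]
    ring
  · rw [hω.2.2 u i j hij hu, map_zero, hω.sumUpdate_eq_zero _ hij hu, sub_zero]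

lemma lieDer_lieDer_apply {p : ℕ} {ω : (Fin p → L) → A} (hω : IsAltForm p ω) (a : L) {b : L}
    (hbr_add : ∀ y z, br b (y + z) = br b y + br b z)
    (hleibniz : ∀ (y : L) (f : A), br b (f • y) = f • br b y + ρ b f • y) (u : Fin p → L) :
    lieDer ρ br a p (lieDer ρ br b p ω) u =
      ρ a (ρ b (ω u)) - ρ a (sumUpdate (br b) ω u) - ρ b (sumUpdate (br a) ω u) +
        sumUpdate (br a) (sumUpdate (br b) ω) u := by
  rw [lieDer_eq ρ br (hω.lieDer ρ br hbr_add hleibniz), lieDer_eq ρ br hω]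
  simp only [sumUpdate_sub, sumUpdate_map, map_sub]
  ring

end LieDerivative

theorem lie_derivative_is_representation_general
    {R A L : Type*} [CommRing R] [CommRing A] [Algebra R A]
    [AddCommGroup L] [Module A L]
    (br : L → L → L) (ρ : L → Derivation R A A)
    -- the bracket is R-bilinear
    (hbr_add_right : ∀ s t u : L, br s (t + u) = br s t + br s u)
    -- antisymmetry and the Jacobi identity
    (hbr_anti : ∀ s t : L, br s t = - br t s)
    (hbr_jacobi : ∀ s t u : L, br s (br t u) + br t (br u s) + br u (br s t) = 0)
    -- the Leibniz rule
    (hleibniz : ∀ (s t : L) (f : A), br s (f • t) = f • br s t + (ρ s f) • t)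
    -- the anchor is a homomorphism onto commutators of derivations
    (hρ_hom : ∀ (s t : L) (f : A), ρ (br s t) f = ρ s (ρ t f) - ρ t (ρ s f))
    (s t : L) (p : ℕ) (ω : (Fin p → L) → A) (hω : IsAltForm p ω) :
    ∀ u : Fin p → L,
      lieDer ρ br s p (lieDer ρ br t p ω) u - lieDer ρ br t p (lieDer ρ br s p ω) u =
        lieDer ρ br (br s t) p ω u := by
  intro u
  have hjacobi : ∀ x, br t (br s x) - br s (br t x) = -br (br s t) x := by
    intro x
    have hneg : br t (br x s) = -br t (br s x) := by
      rw [hbr_anti x s]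
      exact (AddMonoidHom.mk' (br t) (hbr_add_right t)).map_neg _
    have h := hbr_jacobi s t x
    rw [hneg, hbr_anti x (br s t)] at h
    rw [eq_neg_iff_add_eq_zero, ← neg_eq_zero, ← h]
    abel
  have hdiag : sumUpdate (br t ∘ br s) ω u - sumUpdate (br s ∘ br t) ω u =
      -sumUpdate (br (br s t)) ω u := by
    rw [← hω.sumUpdate_sub, ← hω.sumUpdate_neg]
    exact congrArg (sumUpdate · ω u) (funext hjacobi)
  rw [lieDer_lieDer_apply ρ br hω s (hbr_add_right t) (hleibniz t),
    lieDer_lieDer_apply ρ br hω t (hbr_add_right s) (hleibniz s), lieDer_eq ρ br hω]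
  linear_combination sumUpdate_commutator (br s) (br t) ω u + hdiag - hρ_hom s t (ω u)

/-- For a Lie–Rinehart algebra `(A, L, ρ)` over `R` (Jacobi identity
and anchor homomorphism property included), the `E`-Lie derivative is a representation
of `L` on forms: `ᴱL_s ∘ ᴱL_t − ᴱL_t ∘ ᴱL_s = ᴱL_{[s,t]}` on every alternating
`A`-multilinear `p`-form. -/
theorem lie_derivative_is_representation
    {R A L : Type*} [CommRing R] [CommRing A] [Algebra R A]
    [AddCommGroup L] [Module R L] [Module A L] [IsScalarTower R A L]
    (br : L → L → L) (ρ : L → Derivation R A A)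
    -- the bracket is R-bilinear
    (hbr_add_left : ∀ s t u : L, br (s + t) u = br s u + br t u)
    (hbr_add_right : ∀ s t u : L, br s (t + u) = br s t + br s u)
    (hbr_smul_left : ∀ (r : R) (s t : L), br (r • s) t = r • br s t)
    (hbr_smul_right : ∀ (r : R) (s t : L), br s (r • t) = r • br s t)
    -- antisymmetry and the Jacobi identity
    (hbr_anti : ∀ s t : L, br s t = - br t s)
    (hbr_jacobi : ∀ s t u : L, br s (br t u) + br t (br u s) + br u (br s t) = 0)
    -- the anchor is A-linear
    (hρ_add : ∀ s t : L, ρ (s + t) = ρ s + ρ t)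
    (hρ_smul : ∀ (f : A) (s : L), ρ (f • s) = f • ρ s)
    -- the Leibniz rule
    (hleibniz : ∀ (s t : L) (f : A), br s (f • t) = f • br s t + (ρ s f) • t)
    -- the anchor is a homomorphism onto commutators of derivations
    (hρ_hom : ∀ (s t : L) (f : A), ρ (br s t) f = ρ s (ρ t f) - ρ t (ρ s f))
    (s t : L) (p : ℕ) (ω : (Fin p → L) → A) (hω : IsAltForm p ω) :
    ∀ u : Fin p → L,
      lieDer ρ br s p (lieDer ρ br t p ω) u - lieDer ρ br t p (lieDer ρ br s p ω) u =
        lieDer ρ br (br s t) p ω u :=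
  lie_derivative_is_representation_general br ρ hbr_add_right hbr_anti hbr_jacobi hleibniz hρ_hom s
    t p ω hω
end

section
/- Let R be a commutative ring, let (A₁, L₁, ρ₁) and (A₂, L₂, ρ₂) be Lie–Rinehart algebras over R, let A₁ be an A₂-algebra with structure map σ : A₂ → A₁, and let φ̂ : L₁ → A₁ ⊗_{A₂} L₂ be an A₁-linear map satisfying anchor compatibility: ρ₁(s)(σ(f)) = ev_ρ(φ̂(s))(f) for all s ∈ L₁ and f ∈ A₂. Then for every u in the A₂-dual L₂* = Hom_{A₂}(L₂, A₂), all s, s' ∈ L₁, and all finite decompositions φ̂(s) = Σᵢ aᵢ ⊗ ηᵢ and φ̂(s') = Σⱼ a'ⱼ ⊗ η'ⱼ, the following identity holds: ρ₁(s)(Φu(s')) − ρ₁(s')(Φu(s)) − Φu([s,s']) − Σ_{i,j} aᵢ·a'ⱼ·σ((d₂u)(ηᵢ,η'ⱼ)) = Σⱼ ρ₁(s)(a'ⱼ)·σ(u(η'ⱼ)) − Σᵢ ρ₁(s')(aᵢ)·σ(u(ηᵢ)) − ev_u(φ̂([s,s'])) + Σ_{i,j} aᵢ·a'ⱼ·σ(u([ηᵢ,η'ⱼ])).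 -/
open scoped TensorProduct

/-- Evaluation `ev_u : A₁ ⊗_{A₂} L₂ → A₁` induced by `a ⊗ η ↦ a · σ(u(η))`, for
`u` in the `A₂`-dual of `L₂` and `σ : A₂ → A₁` the algebra structure map. -/
noncomputable def evu {A₁ A₂ L₂ : Type*} [CommRing A₁] [CommRing A₂]
    [Algebra A₂ A₁] [AddCommGroup L₂] [Module A₂ L₂]
    (u : L₂ →ₗ[A₂] A₂) : A₁ ⊗[A₂] L₂ →ₗ[A₂] A₁ :=
  TensorProduct.lift
    ((LinearMap.mul A₂ A₁).compl₂ ((Algebra.linearMap A₂ A₁).comp u))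

/-- Evaluation of the anchor at a fixed function: `η ↦ ρ₂(η)(f)`, as an
`A₂`-linear map `L₂ → A₂`; used to express `ev_ρ(·)(f) : a ⊗ η ↦ a · σ(ρ₂(η)(f))`
as `evu (anchorEval ρ₂ f)`. -/
noncomputable def anchorEval {R A₂ L₂ : Type*} [CommRing R] [CommRing A₂]
    [Algebra R A₂] [AddCommGroup L₂] [Module A₂ L₂]
    (ρ₂ : L₂ →ₗ[A₂] Derivation R A₂ A₂) (f : A₂) : L₂ →ₗ[A₂] A₂ where
  toFun η := ρ₂ η f
  map_add' x y := by simp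
  map_smul' c x := by simp

/-- For Lie–Rinehart algebras `(A₁, L₁, ρ₁)`, `(A₂, L₂, ρ₂)` over
`R`, an `A₂`-algebra `A₁` (with structure map `σ`), and an anchor-compatible
`A₁`-linear map `φ̂ : L₁ → A₁ ⊗_{A₂} L₂`, one has, for every `u ∈ L₂*`, all
`s, s' ∈ L₁` and all finite decompositions `φ̂(s) = Σᵢ aᵢ ⊗ ηᵢ`,
`φ̂(s') = Σⱼ a'ⱼ ⊗ η'ⱼ`, the identity (equation (mm1)):
`ρ₁(s)(Φu(s')) − ρ₁(s')(Φu(s)) − Φu([s,s']) − Σ aᵢa'ⱼ σ((d₂u)(ηᵢ,η'ⱼ))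
 = Σ ρ₁(s)(a'ⱼ) σ(u(η'ⱼ)) − Σ ρ₁(s')(aᵢ) σ(u(ηᵢ)) − ev_u(φ̂([s,s'])) + Σ aᵢa'ⱼ σ(u([ηᵢ,η'ⱼ]))`. -/
theorem morphism_chain_property_identity
    {R A₁ A₂ L₁ L₂ : Type*} [CommRing R]
    [CommRing A₁] [Algebra R A₁] [CommRing A₂] [Algebra R A₂]
    [Algebra A₂ A₁] [IsScalarTower R A₂ A₁]
    [AddCommGroup L₁] [Module R L₁] [Module A₁ L₁] [IsScalarTower R A₁ L₁]
    [AddCommGroup L₂] [Module R L₂] [Module A₂ L₂] [IsScalarTower R A₂ L₂]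
    -- brackets and (A-linear) anchors of the two Lie-Rinehart algebras
    (br₁ : L₁ → L₁ → L₁) (ρ₁ : L₁ →ₗ[A₁] Derivation R A₁ A₁)
    (br₂ : L₂ → L₂ → L₂) (ρ₂ : L₂ →ₗ[A₂] Derivation R A₂ A₂)
    -- (A₁, L₁, ρ₁) is a Lie-Rinehart algebra over R
    (hbr₁_add_left : ∀ s t u : L₁, br₁ (s + t) u = br₁ s u + br₁ t u)
    (hbr₁_add_right : ∀ s t u : L₁, br₁ s (t + u) = br₁ s t + br₁ s u)
    (hbr₁_smul_left : ∀ (r : R) (s t : L₁), br₁ (r • s) t = r • br₁ s t)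
    (hbr₁_smul_right : ∀ (r : R) (s t : L₁), br₁ s (r • t) = r • br₁ s t)
    (hbr₁_anti : ∀ s t : L₁, br₁ s t = - br₁ t s)
    (hbr₁_jacobi : ∀ s t u : L₁,
      br₁ s (br₁ t u) + br₁ t (br₁ u s) + br₁ u (br₁ s t) = 0)
    (hleibniz₁ : ∀ (s t : L₁) (f : A₁), br₁ s (f • t) = f • br₁ s t + (ρ₁ s f) • t)
    -- (A₂, L₂, ρ₂) is a Lie-Rinehart algebra over R
    (hbr₂_add_left : ∀ s t u : L₂, br₂ (s + t) u = br₂ s u + br₂ t u)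
    (hbr₂_add_right : ∀ s t u : L₂, br₂ s (t + u) = br₂ s t + br₂ s u)
    (hbr₂_smul_left : ∀ (r : R) (s t : L₂), br₂ (r • s) t = r • br₂ s t)
    (hbr₂_smul_right : ∀ (r : R) (s t : L₂), br₂ s (r • t) = r • br₂ s t)
    (hbr₂_anti : ∀ s t : L₂, br₂ s t = - br₂ t s)
    (hbr₂_jacobi : ∀ s t u : L₂,
      br₂ s (br₂ t u) + br₂ t (br₂ u s) + br₂ u (br₂ s t) = 0)
    (hleibniz₂ : ∀ (s t : L₂) (f : A₂), br₂ s (f • t) = f • br₂ s t + (ρ₂ s f) • t)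
    -- the A₁-linear bundle morphism
    (φ : L₁ →ₗ[A₁] A₁ ⊗[A₂] L₂)
    -- anchor compatibility: ρ₁(s)(σ(f)) = ev_ρ(φ̂(s))(f)
    (hanchor : ∀ (s : L₁) (f : A₂),
      ρ₁ s (algebraMap A₂ A₁ f) = evu (anchorEval ρ₂ f) (φ s)) :
    ∀ (u : L₂ →ₗ[A₂] A₂) (s s' : L₁) (n m : ℕ)
      (a : Fin n → A₁) (η : Fin n → L₂) (a' : Fin m → A₁) (η' : Fin m → L₂),
      φ s = ∑ i, a i ⊗ₜ[A₂] η i → φ s' = ∑ j, a' j ⊗ₜ[A₂] η' j →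
      ρ₁ s (evu u (φ s')) - ρ₁ s' (evu u (φ s)) - evu u (φ (br₁ s s'))
          - ∑ i, ∑ j, a i * a' j *
              algebraMap A₂ A₁
                (ρ₂ (η i) (u (η' j)) - ρ₂ (η' j) (u (η i)) - u (br₂ (η i) (η' j)))
        = (∑ j, ρ₁ s (a' j) * algebraMap A₂ A₁ (u (η' j)))
            - (∑ i, ρ₁ s' (a i) * algebraMap A₂ A₁ (u (η i)))
            - evu u (φ (br₁ s s'))
            + ∑ i, ∑ j, a i * a' j * algebraMap A₂ A₁ (u (br₂ (η i) (η' j))) := by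
  intro u s s' n m a η a' η' hφs hφs'
  have hev : ∀ (v : L₂ →ₗ[A₂] A₂) (b : A₁) (x : L₂),
      evu v (b ⊗ₜ[A₂] x) = b * algebraMap A₂ A₁ (v x) := by
    intro v b x; simp [evu]
  have hevs : evu u (φ s) = ∑ i, a i * algebraMap A₂ A₁ (u (η i)) := by
    rw [hφs, map_sum]; exact Finset.sum_congr rfl fun i _ => hev u (a i) (η i)
  have hevs' : evu u (φ s') = ∑ j, a' j * algebraMap A₂ A₁ (u (η' j)) := by
    rw [hφs', map_sum]; exact Finset.sum_congr rfl fun j _ => hev u (a' j) (η' j)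
  have hρs : ∀ f : A₂, ρ₁ s (algebraMap A₂ A₁ f)
      = ∑ i, a i * algebraMap A₂ A₁ (ρ₂ (η i) f) := by
    intro f; rw [hanchor, hφs, map_sum]
    exact Finset.sum_congr rfl fun i _ => hev (anchorEval ρ₂ f) (a i) (η i)
  have hρs' : ∀ f : A₂, ρ₁ s' (algebraMap A₂ A₁ f)
      = ∑ j, a' j * algebraMap A₂ A₁ (ρ₂ (η' j) f) := by
    intro f; rw [hanchor, hφs', map_sum]
    exact Finset.sum_congr rfl fun j _ => hev (anchorEval ρ₂ f) (a' j) (η' j)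
  have h1 : ρ₁ s (evu u (φ s'))
      = ∑ j, (ρ₁ s (a' j) * algebraMap A₂ A₁ (u (η' j))
          + ∑ i, a i * a' j * algebraMap A₂ A₁ (ρ₂ (η i) (u (η' j)))) := by
    rw [hevs', map_sum]
    refine Finset.sum_congr rfl fun j _ => ?_
    rw [Derivation.leibniz, hρs (u (η' j)), smul_eq_mul, smul_eq_mul, Finset.mul_sum,
      add_comm]
    exact congrArg₂ (· + ·) (mul_comm _ _)
      (Finset.sum_congr rfl fun i _ => by ring)
  have h2 : ρ₁ s' (evu u (φ s))
      = ∑ i, (ρ₁ s' (a i) * algebraMap A₂ A₁ (u (η i))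
          + ∑ j, a i * a' j * algebraMap A₂ A₁ (ρ₂ (η' j) (u (η i)))) := by
    rw [hevs, map_sum]
    refine Finset.sum_congr rfl fun i _ => ?_
    rw [Derivation.leibniz, hρs' (u (η i)), smul_eq_mul, smul_eq_mul, Finset.mul_sum,
      add_comm]
    exact congrArg₂ (· + ·) (mul_comm _ _)
      (Finset.sum_congr rfl fun j _ => by ring)
  rw [h1, h2]
  simp only [map_sub, mul_sub, Finset.sum_add_distrib, Finset.sum_sub_distrib]
  rw [Finset.sum_comm (f := fun j i => a i * a' j * algebraMap A₂ A₁ (ρ₂ (η i) (u (η' j))))]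
  ring
end

section
/- Let R be a commutative ring, let (A₁, L₁, ρ₁) and (A₂, L₂, ρ₂) be Lie–Rinehart algebras over R, let A₁ be an A₂-algebra with structure map σ : A₂ → A₁, and let φ̂ : L₁ → A₁ ⊗_{A₂} L₂ be an A₁-linear map satisfying anchor compatibility: ρ₁(s)(σ(f)) = ev_ρ(φ̂(s))(f) for all s ∈ L₁, f ∈ A₂. Assume the separation property: if w ∈ A₁ ⊗_{A₂} L₂ satisfies ev_u(w) = 0 for all u ∈ L₂* = Hom_{A₂}(L₂, A₂), then w = 0. Then the following are equivalent: (i) the Higgins–Mackenzie morphism condition holds, i.e. for all s, s' ∈ L₁ and all finite decompositions φ̂(s) = Σᵢ aᵢ ⊗ ηᵢ, φ̂(s') = Σⱼ a'ⱼ ⊗ η'ⱼ one has φ̂([s,s']) = Σ_{i,j} aᵢa'ⱼ ⊗ [ηᵢ,η'ⱼ] + Σⱼ ρ₁(s)(a'ⱼ) ⊗ η'ⱼ − Σᵢ ρ₁(s')(aᵢ) ⊗ ηᵢ; (ii) the chain property on 1-forms holds, i.e. for every u ∈ L₂*, all s, s' ∈ L₁ and all such decompositions, ρ₁(s)(Φu(s'))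 − ρ₁(s')(Φu(s)) − Φu([s,s']) = Σ_{i,j} aᵢ·a'ⱼ·σ((d₂u)(ηᵢ,η'ⱼ)). -/
open scoped TensorProduct

/-- Under anchor compatibility and the separation property for
`A₁ ⊗_{A₂} L₂`, the Higgins–Mackenzie morphism condition is equivalent to the
chain property on 1-forms. -/
theorem higgins_mackenzie_iff_chain_property
    {R A₁ A₂ L₁ L₂ : Type*} [CommRing R]
    [CommRing A₁] [Algebra R A₁] [CommRing A₂] [Algebra R A₂]
    [Algebra A₂ A₁] [IsScalarTower R A₂ A₁]
    [AddCommGroup L₁] [Module R L₁] [Module A₁ L₁] [IsScalarTower R A₁ L₁]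
    [AddCommGroup L₂] [Module R L₂] [Module A₂ L₂] [IsScalarTower R A₂ L₂]
    -- brackets and (A-linear) anchors of the two Lie-Rinehart algebras
    (br₁ : L₁ → L₁ → L₁) (ρ₁ : L₁ →ₗ[A₁] Derivation R A₁ A₁)
    (br₂ : L₂ → L₂ → L₂) (ρ₂ : L₂ →ₗ[A₂] Derivation R A₂ A₂)
    -- (A₁, L₁, ρ₁) is a Lie-Rinehart algebra over R
    (hbr₁_add_left : ∀ s t u : L₁, br₁ (s + t) u = br₁ s u + br₁ t u)
    (hbr₁_add_right : ∀ s t u : L₁, br₁ s (t + u) = br₁ s t + br₁ s u)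
    (hbr₁_smul_left : ∀ (r : R) (s t : L₁), br₁ (r • s) t = r • br₁ s t)
    (hbr₁_smul_right : ∀ (r : R) (s t : L₁), br₁ s (r • t) = r • br₁ s t)
    (hbr₁_anti : ∀ s t : L₁, br₁ s t = - br₁ t s)
    (hbr₁_jacobi : ∀ s t u : L₁,
      br₁ s (br₁ t u) + br₁ t (br₁ u s) + br₁ u (br₁ s t) = 0)
    (hleibniz₁ : ∀ (s t : L₁) (f : A₁), br₁ s (f • t) = f • br₁ s t + (ρ₁ s f) • t)
    -- (A₂, L₂, ρ₂) is a Lie-Rinehart algebra over R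
    (hbr₂_add_left : ∀ s t u : L₂, br₂ (s + t) u = br₂ s u + br₂ t u)
    (hbr₂_add_right : ∀ s t u : L₂, br₂ s (t + u) = br₂ s t + br₂ s u)
    (hbr₂_smul_left : ∀ (r : R) (s t : L₂), br₂ (r • s) t = r • br₂ s t)
    (hbr₂_smul_right : ∀ (r : R) (s t : L₂), br₂ s (r • t) = r • br₂ s t)
    (hbr₂_anti : ∀ s t : L₂, br₂ s t = - br₂ t s)
    (hbr₂_jacobi : ∀ s t u : L₂,
      br₂ s (br₂ t u) + br₂ t (br₂ u s) + br₂ u (br₂ s t) = 0)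
    (hleibniz₂ : ∀ (s t : L₂) (f : A₂), br₂ s (f • t) = f • br₂ s t + (ρ₂ s f) • t)
    -- the A₁-linear bundle morphism
    (φ : L₁ →ₗ[A₁] A₁ ⊗[A₂] L₂)
    -- anchor compatibility: ρ₁(s)(σ(f)) = ev_ρ(φ̂(s))(f)
    (hanchor : ∀ (s : L₁) (f : A₂),
      ρ₁ s (algebraMap A₂ A₁ f) = evu (anchorEval ρ₂ f) (φ s))
    -- separation property: the maps ev_u, u ∈ L₂*, jointly separate points
    (hsep : ∀ w : A₁ ⊗[A₂] L₂, (∀ u : L₂ →ₗ[A₂] A₂, evu u w = 0) → w = 0) :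
    -- (i) the Higgins–Mackenzie morphism condition
    (∀ (s s' : L₁) (n m : ℕ)
        (a : Fin n → A₁) (η : Fin n → L₂) (a' : Fin m → A₁) (η' : Fin m → L₂),
        φ s = ∑ i, a i ⊗ₜ[A₂] η i → φ s' = ∑ j, a' j ⊗ₜ[A₂] η' j →
        φ (br₁ s s') =
          (∑ i, ∑ j, (a i * a' j) ⊗ₜ[A₂] br₂ (η i) (η' j))
            + (∑ j, ρ₁ s (a' j) ⊗ₜ[A₂] η' j)
            - ∑ i, ρ₁ s' (a i) ⊗ₜ[A₂] η i) ↔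
    -- (ii) the chain property on 1-forms
    (∀ (u : L₂ →ₗ[A₂] A₂) (s s' : L₁) (n m : ℕ)
        (a : Fin n → A₁) (η : Fin n → L₂) (a' : Fin m → A₁) (η' : Fin m → L₂),
        φ s = ∑ i, a i ⊗ₜ[A₂] η i → φ s' = ∑ j, a' j ⊗ₜ[A₂] η' j →
        ρ₁ s (evu u (φ s')) - ρ₁ s' (evu u (φ s)) - evu u (φ (br₁ s s'))
          = ∑ i, ∑ j, a i * a' j *
              algebraMap A₂ A₁
                (ρ₂ (η i) (u (η' j)) - ρ₂ (η' j) (u (η i)) - u (br₂ (η i) (η' j)))) := by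

  have evu_tmul : ∀ (u : L₂ →ₗ[A₂] A₂) (b : A₁) (x : L₂),
      evu u (b ⊗ₜ[A₂] x) = b * algebraMap A₂ A₁ (u x) := by
    intro u b x; simp [evu]
  have key : ∀ (u : L₂ →ₗ[A₂] A₂) (s : L₁) (n : ℕ) (a : Fin n → A₁) (η : Fin n → L₂),
      φ s = ∑ i, a i ⊗ₜ[A₂] η i →
      evu u (φ s) = ∑ i, a i * algebraMap A₂ A₁ (u (η i)) := by
    intro u s n a η hs
    rw [hs, map_sum]
    exact Finset.sum_congr rfl fun i _ => evu_tmul u (a i) (η i)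
  have anch : ∀ (f : A₂) (s : L₁) (n : ℕ) (a : Fin n → A₁) (η : Fin n → L₂),
      φ s = ∑ i, a i ⊗ₜ[A₂] η i →
      ρ₁ s (algebraMap A₂ A₁ f) = ∑ i, a i * algebraMap A₂ A₁ (ρ₂ (η i) f) := by
    intro f s n a η hs
    rw [hanchor s f, key (anchorEval ρ₂ f) s n a η hs]
    rfl
  have main : ∀ (u : L₂ →ₗ[A₂] A₂) (s s' : L₁) (n m : ℕ)
      (a : Fin n → A₁) (η : Fin n → L₂) (a' : Fin m → A₁) (η' : Fin m → L₂),
      φ s = ∑ i, a i ⊗ₜ[A₂] η i → φ s' = ∑ j, a' j ⊗ₜ[A₂] η' j →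
      ρ₁ s (evu u (φ s')) - ρ₁ s' (evu u (φ s)) =
        ((∑ j, ρ₁ s (a' j) * algebraMap A₂ A₁ (u (η' j)))
          - ∑ i, ρ₁ s' (a i) * algebraMap A₂ A₁ (u (η i)))
        + ((∑ i, ∑ j, a i * a' j * algebraMap A₂ A₁ (ρ₂ (η i) (u (η' j))))
          - ∑ i, ∑ j, a i * a' j * algebraMap A₂ A₁ (ρ₂ (η' j) (u (η i)))) := by
    intro u s s' n m a η a' η' hs hs'
    rw [key u s' m a' η' hs', key u s n a η hs, map_sum, map_sum]
    have h1 : ∀ j, ρ₁ s (a' j * algebraMap A₂ A₁ (u (η' j))) =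
        ρ₁ s (a' j) * algebraMap A₂ A₁ (u (η' j))
          + ∑ i, a i * a' j * algebraMap A₂ A₁ (ρ₂ (η i) (u (η' j))) := by
      intro j
      rw [Derivation.leibniz, anch (u (η' j)) s n a η hs, smul_eq_mul, smul_eq_mul,
        Finset.mul_sum, add_comm]
      refine congrArg₂ (· + ·) (mul_comm _ _) (Finset.sum_congr rfl fun i _ => by ring)
    have h2 : ∀ i, ρ₁ s' (a i * algebraMap A₂ A₁ (u (η i))) =
        ρ₁ s' (a i) * algebraMap A₂ A₁ (u (η i))
          + ∑ j, a i * a' j * algebraMap A₂ A₁ (ρ₂ (η' j) (u (η i))) := by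
      intro i
      rw [Derivation.leibniz, anch (u (η i)) s' m a' η' hs', smul_eq_mul, smul_eq_mul,
        Finset.mul_sum, add_comm]
      refine congrArg₂ (· + ·) (mul_comm _ _) (Finset.sum_congr rfl fun j _ => by ring)
    rw [Finset.sum_congr rfl fun j _ => h1 j, Finset.sum_congr rfl fun i _ => h2 i,
      Finset.sum_add_distrib, Finset.sum_add_distrib, Finset.sum_comm (f := fun j i =>
        a i * a' j * algebraMap A₂ A₁ (ρ₂ (η i) (u (η' j))))]
    abel
  constructor
  · intro hi u s s' n m a η a' η' hs hs'
    have hm := hi s s' n m a η a' η' hs hs'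
    rw [main u s s' n m a η a' η' hs hs', hm]
    simp only [map_sub, map_add, map_sum, evu_tmul, mul_sub, mul_assoc,
      Finset.sum_sub_distrib]
    abel
  · intro hii s s' n m a η a' η' hs hs'
    have h0 : ∀ u : L₂ →ₗ[A₂] A₂,
        evu u (φ (br₁ s s') -
          ((∑ i, ∑ j, (a i * a' j) ⊗ₜ[A₂] br₂ (η i) (η' j))
            + (∑ j, ρ₁ s (a' j) ⊗ₜ[A₂] η' j)
            - ∑ i, ρ₁ s' (a i) ⊗ₜ[A₂] η i)) = 0 := by
      intro u
      have hch := hii u s s' n m a η a' η' hs hs'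
      have hch' : evu u (φ (br₁ s s')) =
          ρ₁ s (evu u (φ s')) - ρ₁ s' (evu u (φ s))
            - ∑ i, ∑ j, a i * a' j *
              algebraMap A₂ A₁
                (ρ₂ (η i) (u (η' j)) - ρ₂ (η' j) (u (η i)) - u (br₂ (η i) (η' j))) := by
        rw [← hch]; ring
      rw [map_sub, hch', main u s s' n m a η a' η' hs hs']
      simp only [map_sub, map_add, map_sum, evu_tmul, mul_sub, mul_assoc,
        Finset.sum_sub_distrib]
      abel
    have := hsep _ h0
    rw [sub_eq_zero] at this
    exact this
end

section
/- Let R be a commutative ring, let (A₁, L₁, ρ₁) and (A₂, L₂, ρ₂) be Lie–Rinehart algebras over R, let A₁ be an A₂-algebra, and let φ̂ : L₁ → A₁ ⊗_{A₂} L₂ be an A₁-linear map. Call s ∈ L₁ projectable to η ∈ L₂ (s ~ η) if φ̂(s) = 1 ⊗ η, and assume φ-relatedness of brackets on projectable pairs: ξ ~ η and ξ' ~ η' imply [ξ,ξ'] ~ [η,η']. Let s = Σᵢ aᵢ·ξᵢ and s' = Σⱼ a'ⱼ·ξ'ⱼ be finite A₁-linear combinations of projectable elements, with ξᵢ ~ ηᵢ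 and ξ'ⱼ ~ η'ⱼ. Then φ̂(s) = Σᵢ aᵢ ⊗ ηᵢ, φ̂(s') = Σⱼ a'ⱼ ⊗ η'ⱼ, and the Higgins–Mackenzie morphism condition holds for these decompositions: φ̂([s,s']) = Σ_{i,j} aᵢa'ⱼ ⊗ [ηᵢ,η'ⱼ] + Σⱼ ρ₁(s)(a'ⱼ) ⊗ η'ⱼ − Σᵢ ρ₁(s')(aᵢ) ⊗ ηᵢ. -/
open scoped TensorProduct

/-- If brackets of projectable elements are φ-related
(`φ̂(ξ) = 1 ⊗ η`, `φ̂(ξ') = 1 ⊗ η'` imply `φ̂([ξ,ξ']) = 1 ⊗ [η,η']`) and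
`s = Σᵢ aᵢ·ξᵢ`, `s' = Σⱼ a'ⱼ·ξ'ⱼ` are finite `A₁`-linear combinations of
projectable elements, then `φ̂(s) = Σᵢ aᵢ ⊗ ηᵢ`, `φ̂(s') = Σⱼ a'ⱼ ⊗ η'ⱼ`, and the
Higgins–Mackenzie morphism identity holds for these decompositions. -/
theorem phi_relation_implies_morphism_on_generated_sections
    {R A₁ A₂ L₁ L₂ : Type*} [CommRing R]
    [CommRing A₁] [Algebra R A₁] [CommRing A₂] [Algebra R A₂]
    [Algebra A₂ A₁] [IsScalarTower R A₂ A₁]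
    [AddCommGroup L₁] [Module R L₁] [Module A₁ L₁] [IsScalarTower R A₁ L₁]
    [AddCommGroup L₂] [Module R L₂] [Module A₂ L₂] [IsScalarTower R A₂ L₂]
    -- brackets and (A-linear) anchors of the two Lie-Rinehart algebras
    (br₁ : L₁ → L₁ → L₁) (ρ₁ : L₁ →ₗ[A₁] Derivation R A₁ A₁)
    (br₂ : L₂ → L₂ → L₂) (ρ₂ : L₂ →ₗ[A₂] Derivation R A₂ A₂)
    -- (A₁, L₁, ρ₁) is a Lie-Rinehart algebra over R
    (hbr₁_add_left : ∀ s t u : L₁, br₁ (s + t) u = br₁ s u + br₁ t u)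
    (hbr₁_add_right : ∀ s t u : L₁, br₁ s (t + u) = br₁ s t + br₁ s u)
    (hbr₁_smul_left : ∀ (r : R) (s t : L₁), br₁ (r • s) t = r • br₁ s t)
    (hbr₁_smul_right : ∀ (r : R) (s t : L₁), br₁ s (r • t) = r • br₁ s t)
    (hbr₁_anti : ∀ s t : L₁, br₁ s t = - br₁ t s)
    (hbr₁_jacobi : ∀ s t u : L₁,
      br₁ s (br₁ t u) + br₁ t (br₁ u s) + br₁ u (br₁ s t) = 0)
    (hleibniz₁ : ∀ (s t : L₁) (f : A₁), br₁ s (f • t) = f • br₁ s t + (ρ₁ s f) • t)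
    -- (A₂, L₂, ρ₂) is a Lie-Rinehart algebra over R
    (hbr₂_add_left : ∀ s t u : L₂, br₂ (s + t) u = br₂ s u + br₂ t u)
    (hbr₂_add_right : ∀ s t u : L₂, br₂ s (t + u) = br₂ s t + br₂ s u)
    (hbr₂_smul_left : ∀ (r : R) (s t : L₂), br₂ (r • s) t = r • br₂ s t)
    (hbr₂_smul_right : ∀ (r : R) (s t : L₂), br₂ s (r • t) = r • br₂ s t)
    (hbr₂_anti : ∀ s t : L₂, br₂ s t = - br₂ t s)
    (hbr₂_jacobi : ∀ s t u : L₂,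
      br₂ s (br₂ t u) + br₂ t (br₂ u s) + br₂ u (br₂ s t) = 0)
    (hleibniz₂ : ∀ (s t : L₂) (f : A₂), br₂ s (f • t) = f • br₂ s t + (ρ₂ s f) • t)
    -- the A₁-linear bundle morphism
    (φ : L₁ →ₗ[A₁] A₁ ⊗[A₂] L₂)
    -- φ-relatedness of brackets on projectable pairs
    (hrel : ∀ (ξ ξ' : L₁) (η η' : L₂),
      φ ξ = (1 : A₁) ⊗ₜ[A₂] η → φ ξ' = (1 : A₁) ⊗ₜ[A₂] η' →
      φ (br₁ ξ ξ') = (1 : A₁) ⊗ₜ[A₂] br₂ η η') :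
    ∀ (s s' : L₁) (n m : ℕ)
      (a : Fin n → A₁) (ξ : Fin n → L₁) (η : Fin n → L₂)
      (a' : Fin m → A₁) (ξ' : Fin m → L₁) (η' : Fin m → L₂),
      s = ∑ i, a i • ξ i → s' = ∑ j, a' j • ξ' j →
      (∀ i, φ (ξ i) = (1 : A₁) ⊗ₜ[A₂] η i) →
      (∀ j, φ (ξ' j) = (1 : A₁) ⊗ₜ[A₂] η' j) →
      φ s = (∑ i, a i ⊗ₜ[A₂] η i) ∧
      φ s' = (∑ j, a' j ⊗ₜ[A₂] η' j) ∧
      φ (br₁ s s') =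
        (∑ i, ∑ j, (a i * a' j) ⊗ₜ[A₂] br₂ (η i) (η' j))
          + (∑ j, ρ₁ s (a' j) ⊗ₜ[A₂] η' j)
          - ∑ i, ρ₁ s' (a i) ⊗ₜ[A₂] η i := by
  intro s s' n m a ξ η a' ξ' η' hs hs' hξ hξ'
  -- bracket with zero
  have hz_r : ∀ t : L₁, br₁ t 0 = 0 := by
    intro t
    have h := hbr₁_add_right t 0 0
    rw [add_zero] at h
    exact add_left_cancel (h.symm.trans (add_zero _).symm)
  -- bracket distributes over finite sums on the right
  have hsum_r : ∀ (t : L₁) (k : ℕ) (v : Fin k → L₁),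
      br₁ t (∑ i, v i) = ∑ i, br₁ t (v i) := by
    intro t k
    induction k with
    | zero => intro v; simpa using hz_r t
    | succ k ih =>
      intro v
      rw [Fin.sum_univ_succ, hbr₁_add_right, ih, Fin.sum_univ_succ]
  -- bracket distributes over finite sums on the left
  have hsum_l : ∀ (t : L₁) (k : ℕ) (v : Fin k → L₁),
      br₁ (∑ i, v i) t = ∑ i, br₁ (v i) t := by
    intro t k v
    rw [hbr₁_anti, hsum_r, ← Finset.sum_neg_distrib]
    exact Finset.sum_congr rfl fun i _ => (hbr₁_anti (v i) t).symm
  -- Leibniz rule on the left slot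
  have hleib_l : ∀ (t u : L₁) (f : A₁),
      br₁ (f • u) t = f • br₁ u t - (ρ₁ t f) • u := by
    intro t u f
    rw [hbr₁_anti, hleibniz₁, hbr₁_anti t u]
    simp [smul_neg, sub_eq_add_neg]
    abel
  -- anchor of a decomposed section
  have hanchor : ∀ (k : ℕ) (c : Fin k → A₁) (v : Fin k → L₁) (f : A₁),
      ρ₁ (∑ i, c i • v i) f = ∑ i, c i * ρ₁ (v i) f := by
    intro k c v f
    rw [map_sum]
    induction k with
    | zero => simp
    | succ k ih =>
      rw [Fin.sum_univ_succ, Fin.sum_univ_succ (f := fun i => c i * ρ₁ (v i) f)]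
      rw [Derivation.add_apply]
      congr 1
      · rw [map_smul]; rfl
      · exact ih _ _
  -- expansion of the bracket in L₁
  have key : br₁ s s' =
      (∑ i, ∑ j, (a i * a' j) • br₁ (ξ i) (ξ' j))
        + (∑ j, (ρ₁ s (a' j)) • ξ' j)
        - ∑ i, (ρ₁ s' (a i)) • ξ i := by
    conv_lhs => rw [hs, hs']
    rw [hsum_l]
    have step : ∀ i, br₁ (a i • ξ i) (∑ j, a' j • ξ' j)
        = (∑ j, (a i * a' j) • br₁ (ξ i) (ξ' j))
          + (∑ j, (a i * ρ₁ (ξ i) (a' j)) • ξ' j)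
          - (ρ₁ s' (a i)) • ξ i := by
      intro i
      rw [hleib_l, hsum_r, ← hs', Finset.smul_sum, ← Finset.sum_add_distrib]
      congr 1
      refine Finset.sum_congr rfl fun j _ => ?_
      rw [hleibniz₁, smul_add, smul_smul, smul_smul]
    rw [Finset.sum_congr rfl fun i _ => step i]
    rw [Finset.sum_sub_distrib, Finset.sum_add_distrib]
    congr 1
    congr 1
    rw [Finset.sum_comm]
    refine Finset.sum_congr rfl fun j _ => ?_
    rw [← Finset.sum_smul]
    congr 1
    rw [hs, hanchor]
  -- φ of the decompositions
  have hφs : φ s = ∑ i, a i ⊗ₜ[A₂] η i := by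
    rw [hs, map_sum]
    refine Finset.sum_congr rfl fun i _ => ?_
    rw [map_smul, hξ i, TensorProduct.smul_tmul', smul_eq_mul, mul_one]
  have hφs' : φ s' = ∑ j, a' j ⊗ₜ[A₂] η' j := by
    rw [hs', map_sum]
    refine Finset.sum_congr rfl fun j _ => ?_
    rw [map_smul, hξ' j, TensorProduct.smul_tmul', smul_eq_mul, mul_one]
  refine ⟨hφs, hφs', ?_⟩
  rw [key, map_sub, map_add, map_sum, map_sum, map_sum]
  congr 1
  · congr 1
    · refine Finset.sum_congr rfl fun i _ => ?_
      rw [map_sum]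
      refine Finset.sum_congr rfl fun j _ => ?_
      rw [map_smul, hrel (ξ i) (ξ' j) (η i) (η' j) (hξ i) (hξ' j),
        TensorProduct.smul_tmul', smul_eq_mul, mul_one]
    · refine Finset.sum_congr rfl fun j _ => ?_
      rw [map_smul, hξ' j, TensorProduct.smul_tmul', smul_eq_mul, mul_one]
  · refine Finset.sum_congr rfl fun i _ => ?_
    rw [map_smul, hξ i, TensorProduct.smul_tmul', smul_eq_mul, mul_one]
end

section
/- Let R be a commutative ring and let Ω₁ and Ω₂ be ℕ-graded-commutative unital R-algebras. Let Φ : Ω₂ → Ω₁ be a grade-preserving R-algebra homomorphism, let d₁ : Ω₁ → Ω₁ be a graded derivation of degree +1, and let d₂ : Ω₂ → Ω₂ be a degree +1 R-linear map. On the tensor product Ω₁ ⊗_R Ω₂ define ᴱd(ω₁ ⊗ ω₂) := (d₁ω₁) ⊗ ω₂ + (−1)^q ω₁ ⊗ (d₂ω₂) for ω₁ homogeneous of degree q, and define Φ^gra : Ω₁ ⊗_R Ω₂ → Ω₁ by Φ^gra(ω₁ ⊗ ω₂) := ω₁ · Φ(ω₂). Then for all homogeneous ω₁ ∈ Ω₁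 of degree q and all ω₂ ∈ Ω₂: (d₁ ∘ Φ^gra − Φ^gra ∘ ᴱd)(ω₁ ⊗ ω₂) = (−1)^q ω₁ · ((d₁∘Φ − Φ∘d₂)(ω₂)). Consequently Φ^gra is a chain map (d₁ ∘ Φ^gra = Φ^gra ∘ ᴱd) if and only if Φ is a chain map (d₁ ∘ Φ = Φ ∘ d₂). -/
section GradedLeibniz

variable {σ A : Type*} [Ring A] [SetLike σ A] {𝒜 : ℕ → σ} {d : A → A}

theorem map_one_eq_zero_of_graded_leibniz [SetLike.GradedOne 𝒜]
    (hleib : ∀ (p : ℕ) (x y : A), x ∈ 𝒜 p →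
      d (x * y) = d x * y + ((-1 : ℤ) ^ p) • (x * d y)) :
    d 1 = 0 := by
  have h := hleib 0 1 1 SetLike.GradedOne.one_mem
  simp only [mul_one, one_mul, pow_zero, one_smul] at h
  exact left_eq_add.mp h

theorem map_mul_sub_graded_leibniz
    (hleib : ∀ (p : ℕ) (x y : A), x ∈ 𝒜 p →
      d (x * y) = d x * y + ((-1 : ℤ) ^ p) • (x * d y))
    {q : ℕ} {x : A} (hx : x ∈ 𝒜 q) (y z : A) :
    d (x * y) - (d x * y + ((-1 : ℤ) ^ q) • (x * z)) =
      ((-1 : ℤ) ^ q) • (x * (d y - z)) := by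
  rw [hleib q x y hx, mul_sub, smul_sub]
  abel

end GradedLeibniz

theorem graph_is_chain_map_iff_morphism_general
    {R Ω₁ Ω₂ : Type*} [CommRing R]
    [Ring Ω₁] [Algebra R Ω₁] [Ring Ω₂] [Algebra R Ω₂]
    (𝒜₁ : ℕ → Submodule R Ω₁)
    [GradedAlgebra 𝒜₁]
    -- Φ is a grade-preserving R-algebra homomorphism
    (Φ : Ω₂ →ₐ[R] Ω₁)
    -- d₁ is a graded derivation of degree +1 on Ω₁
    (d₁ : Ω₁ →ₗ[R] Ω₁)
    (hd₁leib : ∀ (p : ℕ) (x y : Ω₁), x ∈ 𝒜₁ p →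
      d₁ (x * y) = d₁ x * y + ((-1 : ℤ) ^ p) • (x * d₁ y))
    -- d₂ is a degree +1 R-linear map on Ω₂
    (d₂ : Ω₂ →ₗ[R] Ω₂) :
    -- the basic identity relating (d₁∘Φᵍʳᵃ − Φᵍʳᵃ∘ᴱd)(ω₁ ⊗ ω₂) to (d₁∘Φ − Φ∘d₂)(ω₂)
    (∀ (q : ℕ) (ω₁ : Ω₁), ω₁ ∈ 𝒜₁ q → ∀ ω₂ : Ω₂,
        d₁ (ω₁ * Φ ω₂)
            - (d₁ ω₁ * Φ ω₂ + ((-1 : ℤ) ^ q) • (ω₁ * Φ (d₂ ω₂)))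
          = ((-1 : ℤ) ^ q) • (ω₁ * (d₁ (Φ ω₂) - Φ (d₂ ω₂)))) ∧
    -- consequently, Φᵍʳᵃ is a chain map iff Φ is a chain map
    ((∀ (q : ℕ) (ω₁ : Ω₁), ω₁ ∈ 𝒜₁ q → ∀ ω₂ : Ω₂,
        d₁ (ω₁ * Φ ω₂)
          = d₁ ω₁ * Φ ω₂ + ((-1 : ℤ) ^ q) • (ω₁ * Φ (d₂ ω₂))) ↔
      (∀ ω₂ : Ω₂, d₁ (Φ ω₂) = Φ (d₂ ω₂))) := by
  have identity := fun q ω₁ (hω₁ : ω₁ ∈ 𝒜₁ q) ω₂ ↦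
    map_mul_sub_graded_leibniz hd₁leib hω₁ (Φ ω₂) (Φ (d₂ ω₂))
  refine ⟨identity, fun h ω₂ ↦ ?_, fun h q ω₁ hω₁ ω₂ ↦ ?_⟩
  · simpa [map_one_eq_zero_of_graded_leibniz hd₁leib] using
      h 0 1 (SetLike.one_mem_graded 𝒜₁) ω₂
  · rw [← sub_eq_zero, identity q ω₁ hω₁ ω₂, h, sub_self, mul_zero, smul_zero]

/-- Let `Ω₁`, `Ω₂` be ℕ-graded-commutative unital `R`-algebras,
`Φ : Ω₂ → Ω₁` a grade-preserving `R`-algebra homomorphism, `d₁` a graded derivation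
of degree `+1` on `Ω₁`, and `d₂ : Ω₂ → Ω₂` a degree `+1` `R`-linear map. On the
tensor product, the total differential is `ᴱd(ω₁ ⊗ ω₂) = (d₁ω₁) ⊗ ω₂ + (−1)^q ω₁ ⊗
(d₂ω₂)` for `ω₁` of degree `q`, and the graph map is `Φᵍʳᵃ(ω₁ ⊗ ω₂) = ω₁ · Φ(ω₂)`.
Then `(d₁ ∘ Φᵍʳᵃ − Φᵍʳᵃ ∘ ᴱd)(ω₁ ⊗ ω₂) = (−1)^q ω₁ · ((d₁∘Φ − Φ∘d₂)(ω₂))`;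
consequently `Φᵍʳᵃ` is a chain map iff `Φ` is a chain map. -/
theorem graph_is_chain_map_iff_morphism
    {R Ω₁ Ω₂ : Type*} [CommRing R]
    [Ring Ω₁] [Algebra R Ω₁] [Ring Ω₂] [Algebra R Ω₂]
    (𝒜₁ : ℕ → Submodule R Ω₁) (𝒜₂ : ℕ → Submodule R Ω₂)
    [GradedAlgebra 𝒜₁] [GradedAlgebra 𝒜₂]
    -- graded commutativity of Ω₁ and Ω₂
    (hcomm₁ : ∀ (p q : ℕ) (x y : Ω₁), x ∈ 𝒜₁ p → y ∈ 𝒜₁ q →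
      x * y = ((-1 : ℤ) ^ (p * q)) • (y * x))
    (hcomm₂ : ∀ (p q : ℕ) (x y : Ω₂), x ∈ 𝒜₂ p → y ∈ 𝒜₂ q →
      x * y = ((-1 : ℤ) ^ (p * q)) • (y * x))
    -- Φ is a grade-preserving R-algebra homomorphism
    (Φ : Ω₂ →ₐ[R] Ω₁)
    (hΦ : ∀ (p : ℕ) (x : Ω₂), x ∈ 𝒜₂ p → Φ x ∈ 𝒜₁ p)
    -- d₁ is a graded derivation of degree +1 on Ω₁
    (d₁ : Ω₁ →ₗ[R] Ω₁)
    (hd₁deg : ∀ (p : ℕ) (x : Ω₁), x ∈ 𝒜₁ p → d₁ x ∈ 𝒜₁ (p + 1))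
    (hd₁leib : ∀ (p : ℕ) (x y : Ω₁), x ∈ 𝒜₁ p →
      d₁ (x * y) = d₁ x * y + ((-1 : ℤ) ^ p) • (x * d₁ y))
    -- d₂ is a degree +1 R-linear map on Ω₂
    (d₂ : Ω₂ →ₗ[R] Ω₂)
    (hd₂deg : ∀ (p : ℕ) (x : Ω₂), x ∈ 𝒜₂ p → d₂ x ∈ 𝒜₂ (p + 1)) :
    -- the basic identity relating (d₁∘Φᵍʳᵃ − Φᵍʳᵃ∘ᴱd)(ω₁ ⊗ ω₂) to (d₁∘Φ − Φ∘d₂)(ω₂)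
    (∀ (q : ℕ) (ω₁ : Ω₁), ω₁ ∈ 𝒜₁ q → ∀ ω₂ : Ω₂,
        d₁ (ω₁ * Φ ω₂)
            - (d₁ ω₁ * Φ ω₂ + ((-1 : ℤ) ^ q) • (ω₁ * Φ (d₂ ω₂)))
          = ((-1 : ℤ) ^ q) • (ω₁ * (d₁ (Φ ω₂) - Φ (d₂ ω₂)))) ∧
    -- consequently, Φᵍʳᵃ is a chain map iff Φ is a chain map
    ((∀ (q : ℕ) (ω₁ : Ω₁), ω₁ ∈ 𝒜₁ q → ∀ ω₂ : Ω₂,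
        d₁ (ω₁ * Φ ω₂)
          = d₁ ω₁ * Φ ω₂ + ((-1 : ℤ) ^ q) • (ω₁ * Φ (d₂ ω₂))) ↔
      (∀ ω₂ : Ω₂, d₁ (Φ ω₂) = Φ (d₂ ω₂))) :=
  graph_is_chain_map_iff_morphism_general 𝒜₁ Φ d₁ hd₁leib d₂
end

section
/- Let R be a commutative ring and let V₁, V₂ be R-modules. Let Φ : V₂ → V₁, d₁, ι₁ : V₁ → V₁, and d₂, ι₂ : V₂ → V₂ be R-linear maps with d₁ ∘ d₁ = 0 and d₂ ∘ d₂ = 0. Set L₁ := d₁∘ι₁ + ι₁∘d₁, L₂ := d₂∘ι₂ + ι₂∘d₂, F := d₁∘Φ − Φ∘d₂, and δ := Φ∘L₂ − L₁∘Φ. Then: (i) δ = d₁∘(Φ∘ι₂ − ι₁∘Φ) + (Φ∘ι₂ − ι₁∘Φ)∘d₂ − (F∘ι₂ + ι₁∘F); (ii) if F = 0 then d₁∘δ = δ∘d₂. -/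
/-- With `L₁ := d₁∘ι₁ + ι₁∘d₁`, `L₂ := d₂∘ι₂ + ι₂∘d₂`,
`F := d₁∘Φ − Φ∘d₂` and `δ := Φ∘L₂ − L₁∘Φ`, one has
(i) `δ = d₁∘(Φ∘ι₂ − ι₁∘Φ) + (Φ∘ι₂ − ι₁∘Φ)∘d₂ − (F∘ι₂ + ι₁∘F)`, and
(ii) if `F = 0` then `d₁∘δ = δ∘d₂`. -/
theorem gauge_variation_decomposition_and_onshell_chain_property
    {R V₁ V₂ : Type*} [CommRing R]
    [AddCommGroup V₁] [Module R V₁] [AddCommGroup V₂] [Module R V₂]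
    (Φ : V₂ →ₗ[R] V₁) (d₁ ι₁ : V₁ →ₗ[R] V₁) (d₂ ι₂ : V₂ →ₗ[R] V₂)
    (hd₁ : d₁ ∘ₗ d₁ = 0) (hd₂ : d₂ ∘ₗ d₂ = 0) :
    (Φ ∘ₗ (d₂ ∘ₗ ι₂ + ι₂ ∘ₗ d₂) - (d₁ ∘ₗ ι₁ + ι₁ ∘ₗ d₁) ∘ₗ Φ =
        d₁ ∘ₗ (Φ ∘ₗ ι₂ - ι₁ ∘ₗ Φ) + (Φ ∘ₗ ι₂ - ι₁ ∘ₗ Φ) ∘ₗ d₂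
          - ((d₁ ∘ₗ Φ - Φ ∘ₗ d₂) ∘ₗ ι₂ + ι₁ ∘ₗ (d₁ ∘ₗ Φ - Φ ∘ₗ d₂))) ∧
    (d₁ ∘ₗ Φ - Φ ∘ₗ d₂ = 0 →
      d₁ ∘ₗ (Φ ∘ₗ (d₂ ∘ₗ ι₂ + ι₂ ∘ₗ d₂) - (d₁ ∘ₗ ι₁ + ι₁ ∘ₗ d₁) ∘ₗ Φ) =
        (Φ ∘ₗ (d₂ ∘ₗ ι₂ + ι₂ ∘ₗ d₂) - (d₁ ∘ₗ ι₁ + ι₁ ∘ₗ d₁) ∘ₗ Φ) ∘ₗ d₂) := by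
  constructor
  · ext v
    simp [LinearMap.comp_apply]
    abel
  · intro hF
    have h : d₁ ∘ₗ Φ = Φ ∘ₗ d₂ := by
      have := sub_eq_zero.mp hF; exact this
    ext v
    have hF' : ∀ x, d₁ (Φ x) = Φ (d₂ x) := fun x => congrFun (congrArg DFunLike.coe h) x
    have h1 : ∀ x : V₁, d₁ (d₁ x) = 0 := fun x => congrFun (congrArg DFunLike.coe hd₁) x
    have h2 : ∀ x : V₂, d₂ (d₂ x) = 0 := fun x => congrFun (congrArg DFunLike.coe hd₂) x
    simp [LinearMap.comp_apply, hF', h1, h2]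
end
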